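/- arXiv:1802.05558 — 2 statements merged into one kernel-verified Lean document; each statement's English description precedes it below -/
import Mathlib

section
/- Let a_1, a_2, a_3 ≥ 1 and b_1, b_2, b_3 > 0, and let A be the 3×3 matrix with rows (a_1,b_1,0), (0,a_2,b_2), (b_3,0,a_3). If the map Φ_A is positive, then (a_1a_2a_3)^{1/3} + (b_1b_2b_3)^{1/3} ≥ 2. -/
open Matrix
open scoped ComplexOrder

noncomputable section

/-- A map between complex matrix algebras is positive if it maps positive semidefinite
matrices to positive semidefinite matrices. -/
def IsPosMap {m n : ℕ} (Φ : Matrix (Fin m) (Fin m) ℂ → Matrix (Fin n) (Fin n) ℂ) : Prop :=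
  ∀ X, X.PosSemidef → (Φ X).PosSemidef

/-- Blockwise application of a map `Φ : M_m → M_n` to a matrix in `M_k(M_m)`:
`Φ_k (X_{ij}) = (Φ(X_{ij}))`. -/
def blockApply {m n : ℕ} (k : ℕ)
    (Φ : Matrix (Fin m) (Fin m) ℂ → Matrix (Fin n) (Fin n) ℂ)
    (X : Matrix (Fin k × Fin m) (Fin k × Fin m) ℂ) :
    Matrix (Fin k × Fin n) (Fin k × Fin n) ℂ :=
  Matrix.of fun p q => Φ (Matrix.of fun i j => X (p.1, i) (q.1, j)) p.2 q.2

/-- `Φ` is completely positive if it is `k`-positive for every `k`, i.e. the blockwise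
application of `Φ` to `M_k(M_m)` is a positive map for every `k`. -/
def IsCompletelyPositive {m n : ℕ}
    (Φ : Matrix (Fin m) (Fin m) ℂ → Matrix (Fin n) (Fin n) ℂ) : Prop :=
  ∀ k : ℕ, ∀ X : Matrix (Fin k × Fin m) (Fin k × Fin m) ℂ,
    X.PosSemidef → (blockApply k Φ X).PosSemidef

/-- `Φ` is decomposable if it is the sum of a completely positive linear map and a
completely copositive linear map. -/
def IsDecomposable {m n : ℕ}
    (Φ : Matrix (Fin m) (Fin m) ℂ → Matrix (Fin n) (Fin n) ℂ) : Prop :=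
  ∃ Φ₁ Φ₂ : Matrix (Fin m) (Fin m) ℂ → Matrix (Fin n) (Fin n) ℂ,
    IsLinearMap ℂ Φ₁ ∧ IsLinearMap ℂ Φ₂ ∧
    IsCompletelyPositive Φ₁ ∧ IsCompletelyPositive (fun X => (Φ₂ X)ᵀ) ∧
    ∀ X, Φ X = Φ₁ X + Φ₂ X

/-- The Choi matrix of `Φ`: `C_Φ = (Φ(E_{ij}))_{i,j}` as an element of `M_m ⊗ M_n`. -/
def choiMatrix {m n : ℕ} (Φ : Matrix (Fin m) (Fin m) ℂ → Matrix (Fin n) (Fin n) ℂ) :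
    Matrix (Fin m × Fin n) (Fin m × Fin n) ℂ :=
  Matrix.of fun p q => Φ (Matrix.single p.1 q.1 1) p.2 q.2

/-- The simple tensor `ξ ⊗ η` of two vectors. -/
def tensorVec {m n : ℕ} (ξ : Fin m → ℂ) (η : Fin n → ℂ) : Fin m × Fin n → ℂ :=
  fun p => ξ p.1 * η p.2

/-- The partial transposition `(id ⊗ transpose)` on `M_m ⊗ M_n`. -/
def partialTranspose {m n : ℕ} (ρ : Matrix (Fin m × Fin n) (Fin m × Fin n) ℂ) :
    Matrix (Fin m × Fin n) (Fin m × Fin n) ℂ :=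
  Matrix.of fun p q => ρ (p.1, q.2) (q.1, p.2)

/-- The Choi-like map `Φ_A` associated to a matrix `A` of coefficients: the `i`-th diagonal
entry of `Φ_A(X)` is `∑ k, A i k * x_{kk}` and the off-diagonal entries are `-x_{ij}`. -/
def PhiMap {n : ℕ} (A : Matrix (Fin n) (Fin n) ℝ) (X : Matrix (Fin n) (Fin n) ℂ) :
    Matrix (Fin n) (Fin n) ℂ :=
  Matrix.of fun i j => if i = j then ∑ k, (A i k : ℂ) * X k k else -X i j

/-- The generalized Choi map `Φ_{[a,b,c]}` of Cho, Kye and Lee. -/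
def genChoiMap (a b c : ℝ) : Matrix (Fin 3) (Fin 3) ℂ → Matrix (Fin 3) (Fin 3) ℂ :=
  PhiMap !![a, b, c; c, a, b; b, c, a]

/-- Kye's map `Φ_{[a; c₁, c₂, c₃]}`. -/
def kyeMap (a c₁ c₂ c₃ : ℝ) : Matrix (Fin 3) (Fin 3) ℂ → Matrix (Fin 3) (Fin 3) ℂ :=
  PhiMap !![a, 0, c₁; c₂, a, 0; 0, c₃, a]

/-- The diagonal map `Δ_A(X) = diag(∑_j (a_{ij} + δ_{ij}) x_{jj})_i`. -/
def DeltaMap {n : ℕ} (A : Matrix (Fin n) (Fin n) ℝ) (X : Matrix (Fin n) (Fin n) ℂ) :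
    Matrix (Fin n) (Fin n) ℂ :=
  Matrix.diagonal (fun i => ∑ j, ((A i j : ℂ) + if i = j then 1 else 0) * X j j)

/-- The map `Φ_A(X) = Δ_A(X) - X`. -/
def PhiDelta {n : ℕ} (A : Matrix (Fin n) (Fin n) ℝ) (X : Matrix (Fin n) (Fin n) ℂ) :
    Matrix (Fin n) (Fin n) ℂ :=
  DeltaMap A X - X

/-!
Evaluating `Φ_A` at the rank-one matrix `t tᵀ` of a real vector `t` and testing the result
against `vᵢ = tᵢ / Dᵢ`, where `Dᵢ = ∑ₖ aᵢₖ tₖ² + tᵢ²`, shows that a positive `Φ_A` satisfies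
`∑ᵢ tᵢ² / Dᵢ ≤ 1` for every `t`. For the cyclic matrix of the theorem, with `α` and `β` the
geometric means of the `aᵢ` and of the `bᵢ`, the vector `t` can be chosen so that the `i`-th
term is `1 / (1 + cᵢ)` with `cᵢ = (α + β) aᵢ / α`. Then `cᵢ ≥ 1` and `c₁c₂c₃ = (α + β)³`, so
convexity of `x ↦ 1 / (1 + eˣ)` on `x ≥ 0` gives `∑ᵢ 1 / (1 + cᵢ) ≥ 3 / (1 + α + β)`, which
exceeds `1` when `α + β < 2`.
-/

theorem phiMap_eq_diagonal_sub {n : ℕ} (A : Matrix (Fin n) (Fin n) ℝ)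
    (X : Matrix (Fin n) (Fin n) ℂ) :
    PhiMap A X = diagonal (fun i => ∑ k, (A i k : ℂ) * X k k + X i i) - X := by
  ext i j
  by_cases h : i = j
  · subst h; simp [PhiMap]
  · simp [PhiMap, h]

theorem dotProduct_phiMap_vecMulVec_mulVec {n : ℕ} (A : Matrix (Fin n) (Fin n) ℝ)
    (t v : Fin n → ℝ) :
    star (fun i => (v i : ℂ)) ⬝ᵥ
        (PhiMap A (vecMulVec (fun i => (t i : ℂ)) (fun i => (t i : ℂ))) *ᵥ fun i => (v i : ℂ)) =
      ((∑ i, (∑ k, A i k * t k ^ 2 + t i ^ 2) * v i ^ 2 - (∑ i, t i * v i) ^ 2 : ℝ) : ℂ) := by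
  rw [phiMap_eq_diagonal_sub, sub_mulVec, dotProduct_sub, vecMulVec_mulVec]
  simp [dotProduct, mulVec_diagonal, vecMulVec, Finset.mul_sum, Finset.sum_mul, sq]
  congr 1
  · exact Finset.sum_congr rfl fun i _ => by ring
  · exact Finset.sum_congr rfl fun i _ => Finset.sum_congr rfl fun j _ => by ring

theorem IsPosMap.sum_sq_div_le_one {n : ℕ} {A : Matrix (Fin n) (Fin n) ℝ}
    (h : IsPosMap (PhiMap A)) (t : Fin n → ℝ) :
    ∑ i, t i ^ 2 / (∑ k, A i k * t k ^ 2 + t i ^ 2) ≤ 1 := by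
  set D := fun i => ∑ k, A i k * t k ^ 2 + t i ^ 2
  set S := ∑ i, t i ^ 2 / D i
  have hX : (vecMulVec (fun i => (t i : ℂ)) (fun i => (t i : ℂ))).PosSemidef := by
    have hstar : star (fun i => (t i : ℂ)) = fun i => (t i : ℂ) := by
      ext i; simp [Complex.conj_ofReal]
    simpa only [hstar] using posSemidef_vecMulVec_self_star (fun i => (t i : ℂ))
  -- At `vᵢ = tᵢ / Dᵢ` the form is `S - S²`, also when some `Dᵢ = 0` since then `vᵢ = 0`.
  have hform := (h _ hX).dotProduct_mulVec_nonneg (fun i => ((t i / D i : ℝ) : ℂ))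
  rw [dotProduct_phiMap_vecMulVec_mulVec, Complex.zero_le_real] at hform
  have hdiag : ∑ i, D i * (t i / D i) ^ 2 = S := by
    refine Finset.sum_congr rfl fun i _ => ?_
    by_cases hD : D i = 0
    · simp [hD]
    · field_simp
  have hoff : ∑ i, t i * (t i / D i) = S := Finset.sum_congr rfl fun i _ => by ring
  rw [hdiag, hoff] at hform
  nlinarith

theorem two_mul_inv_add_one_le {x y m : ℝ} (hx : 0 ≤ x) (hy : 0 ≤ y) (hm : 1 ≤ m)
    (hxy : x * y = m ^ 2) :
    2 * (m + 1)⁻¹ ≤ (x + 1)⁻¹ + (y + 1)⁻¹ := by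
  have hmxy : 2 * m ≤ x + y := by nlinarith [sq_nonneg (x - y)]
  rw [← div_eq_mul_inv, inv_add_inv (by positivity) (by positivity),
    div_le_div_iff₀ (by positivity) (by positivity)]
  nlinarith [mul_nonneg (sub_nonneg.2 hm) (sub_nonneg.2 hmxy)]

theorem three_mul_inv_add_one_le {c₁ c₂ c₃ g : ℝ}
    (h₁ : 1 ≤ c₁) (h₂ : 1 ≤ c₂) (h₃ : 1 ≤ c₃) (hg : 0 ≤ g) (hprod : c₁ * c₂ * c₃ = g ^ 3) :
    3 * (g + 1)⁻¹ ≤ (c₁ + 1)⁻¹ + (c₂ + 1)⁻¹ + (c₃ + 1)⁻¹ := by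
  have hg₁ : 1 ≤ g := by
    by_contra! hlt
    nlinarith [pow_lt_one₀ hg hlt three_ne_zero, mul_le_mul h₁ h₂ zero_le_one (by linarith)]
  set m := √(c₁ * c₂)
  set n := √(c₃ * g)
  have hm : m ^ 2 = c₁ * c₂ := Real.sq_sqrt (by positivity)
  have hn : n ^ 2 = c₃ * g := Real.sq_sqrt (by positivity)
  have hm₁ : 1 ≤ m := Real.one_le_sqrt.2 (by nlinarith)
  have hn₁ : 1 ≤ n := Real.one_le_sqrt.2 (by nlinarith)
  have hmn : m * n = g ^ 2 := by
    rw [← Real.sqrt_mul (by positivity), show c₁ * c₂ * (c₃ * g) = (g ^ 2) ^ 2 by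
      rw [← mul_assoc, hprod]; ring]
    exact Real.sqrt_sq (by positivity)
  -- Cauchy's forward–backward trick: pad with a fourth value `g` and pair off twice.
  have h₁₂ := two_mul_inv_add_one_le (by linarith) (by linarith) hm₁ hm.symm
  have h₃g := two_mul_inv_add_one_le (by linarith) hg hn₁ hn.symm
  have hmn' := two_mul_inv_add_one_le (by linarith) (by linarith) hg₁ hmn
  linarith

theorem IsPosMap.cyclic_sum_le_one {a₁ a₂ a₃ b₁ b₂ b₃ : ℝ}
    (h : IsPosMap (PhiMap !![a₁, b₁, 0; 0, a₂, b₂; b₃, 0, a₃]))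
    {r₁ r₂ r₃ : ℝ} (hr₁ : 0 ≤ r₁) (hr₂ : 0 ≤ r₂) (hr₃ : 0 ≤ r₃) :
    r₁ / (a₁ * r₁ + b₁ * r₂ + r₁) + r₂ / (a₂ * r₂ + b₂ * r₃ + r₂) +
      r₃ / (b₃ * r₁ + a₃ * r₃ + r₃) ≤ 1 := by
  simpa [Fin.sum_univ_three, Real.sq_sqrt, hr₁, hr₂, hr₃, add_assoc] using
    h.sum_sq_div_le_one ![√r₁, √r₂, √r₃]

theorem IsPosMap.sum_inv_add_one_le_one_of_cube_roots {a₁ a₂ a₃ b₁ b₂ b₃ : ℝ}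
    (h : IsPosMap (PhiMap !![a₁, b₁, 0; 0, a₂, b₂; b₃, 0, a₃]))
    (ha₁ : 0 < a₁) (ha₂ : 0 < a₂) (ha₃ : 0 < a₃) (hb₁ : 0 < b₁) (hb₂ : 0 < b₂) (hb₃ : 0 < b₃)
    {α β : ℝ} (hα : 0 < α) (hβ : 0 < β) (hα₃ : α ^ 3 = a₁ * a₂ * a₃)
    (hβ₃ : β ^ 3 = b₁ * b₂ * b₃) :
    ((α + β) * a₁ / α + 1)⁻¹ + ((α + β) * a₂ / α + 1)⁻¹ + ((α + β) * a₃ / α + 1)⁻¹ ≤ 1 := by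
  -- These weights make `bᵢ rᵢ₊₁ / rᵢ = β aᵢ / α` cyclically, as `α³ β³ = a₁a₂a₃ b₁b₂b₃`.
  have key := h.cyclic_sum_le_one (r₁ := α ^ 2 * b₁ * b₂) (r₂ := α * β * a₁ * b₂)
    (r₃ := β ^ 2 * a₁ * a₂) (by positivity) (by positivity) (by positivity)
  have e₁ : α ^ 2 * b₁ * b₂ / (a₁ * (α ^ 2 * b₁ * b₂) + b₁ * (α * β * a₁ * b₂) + α ^ 2 * b₁ * b₂)
      = ((α + β) * a₁ / α + 1)⁻¹ := by
    field_simp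
  have e₂ : α * β * a₁ * b₂ / (a₂ * (α * β * a₁ * b₂) + b₂ * (β ^ 2 * a₁ * a₂) + α * β * a₁ * b₂)
      = ((α + β) * a₂ / α + 1)⁻¹ := by
    field_simp
  have e₃ : β ^ 2 * a₁ * a₂ / (b₃ * (α ^ 2 * b₁ * b₂) + a₃ * (β ^ 2 * a₁ * a₂) + β ^ 2 * a₁ * a₂)
      = ((α + β) * a₃ / α + 1)⁻¹ := by
    field_simp
    linear_combination a₁ * a₂ * a₃ * hβ₃ - b₁ * b₂ * b₃ * hα₃
  rwa [e₁, e₂, e₃] at key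

theorem rpow_one_div_three_pow {x : ℝ} (hx : 0 ≤ x) : (x ^ ((1 : ℝ) / 3)) ^ 3 = x := by
  rw [one_div]
  exact_mod_cast Real.rpow_inv_natCast_pow hx three_ne_zero

/-- For `a₁, a₂, a₃ ≥ 1`, `b₁, b₂, b₃ > 0` and `A` with rows `(a₁,b₁,0)`,
`(0,a₂,b₂)`, `(b₃,0,a₃)`: if `Φ_A` is positive then `(a₁a₂a₃)^{1/3} + (b₁b₂b₃)^{1/3} ≥ 2`. -/
theorem phiMap_pos_implies_geom_means (a₁ a₂ a₃ b₁ b₂ b₃ : ℝ)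
    (ha₁ : 1 ≤ a₁) (ha₂ : 1 ≤ a₂) (ha₃ : 1 ≤ a₃)
    (hb₁ : 0 < b₁) (hb₂ : 0 < b₂) (hb₃ : 0 < b₃)
    (hpos : IsPosMap (PhiMap !![a₁, b₁, 0; 0, a₂, b₂; b₃, 0, a₃])) :
    2 ≤ (a₁ * a₂ * a₃) ^ ((1 : ℝ) / 3) + (b₁ * b₂ * b₃) ^ ((1 : ℝ) / 3) := by
  set α := (a₁ * a₂ * a₃) ^ ((1 : ℝ) / 3)
  set β := (b₁ * b₂ * b₃) ^ ((1 : ℝ) / 3)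
  have hα : 0 < α := by positivity
  have hβ : 0 < β := by positivity
  have hα₃ : α ^ 3 = a₁ * a₂ * a₃ := rpow_one_div_three_pow (by positivity)
  have hβ₃ : β ^ 3 = b₁ * b₂ * b₃ := rpow_one_div_three_pow (by positivity)
  have hupper := hpos.sum_inv_add_one_le_one_of_cube_roots (by positivity) (by positivity)
    (by positivity) hb₁ hb₂ hb₃ hα hβ hα₃ hβ₃
  have hc : ∀ a : ℝ, 1 ≤ a → 1 ≤ (α + β) * a / α := fun a ha => by
    rw [le_div_iff₀ hα]; nlinarith
  have hprod : (α + β) * a₁ / α * ((α + β) * a₂ / α) * ((α + β) * a₃ / α) = (α + β) ^ 3 := by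
    field_simp
    exact hα₃.symm
  have hlower := three_mul_inv_add_one_le (hc a₁ ha₁) (hc a₂ ha₂) (hc a₃ ha₃)
    (by positivity) hprod
  by_contra! hlt
  have hthree : 1 < 3 * (α + β + 1)⁻¹ := by
    rw [← div_eq_mul_inv, one_lt_div (by positivity)]; linarith
  linarith
end
end

section
/- Let A be the 3×3 matrix with rows (1/2, 1, 0), (0, 1, 1), (1, 0, 2). Then the map Φ_A is not positive; in particular, for the positive semidefinite rank-one matrix X with entries X_{11}=2^{2/3}, X_{12}=X_{13}=X_{21}=X_{31}=2^{1/6}, X_{22}=X_{23}=X_{32}=X_{33}=2^{-1/3}, the matrix Φ_A(X) has determinant −1 and hence is not positive semidefinite. -/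
open Matrix
open scoped ComplexOrder

noncomputable section

/-- The positive semidefinite rank-one matrix `X` from the counterexample. -/
def exampleX : Matrix (Fin 3) (Fin 3) ℂ :=
  !![(((2 : ℝ) ^ ((2 : ℝ) / 3) : ℝ) : ℂ), (((2 : ℝ) ^ ((1 : ℝ) / 6) : ℝ) : ℂ),
       (((2 : ℝ) ^ ((1 : ℝ) / 6) : ℝ) : ℂ);
     (((2 : ℝ) ^ ((1 : ℝ) / 6) : ℝ) : ℂ), (((2 : ℝ) ^ (-(1 : ℝ) / 3) : ℝ) : ℂ),
       (((2 : ℝ) ^ (-(1 : ℝ) / 3) : ℝ) : ℂ);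
     (((2 : ℝ) ^ ((1 : ℝ) / 6) : ℝ) : ℂ), (((2 : ℝ) ^ (-(1 : ℝ) / 3) : ℝ) : ℂ),
       (((2 : ℝ) ^ (-(1 : ℝ) / 3) : ℝ) : ℂ)]

/-! `X = v vᴴ` for `v = (2^{1/3}, 2^{-1/6}, 2^{-1/6})`, and every `Φ_A(X)` is a diagonal matrix
minus `X`. Here the diagonal is `D = q • diag(4, 3, 5)` with `q = 2^{-1/3}`, while
`|v_i|² = (2q, q, q)`, so the matrix determinant lemma gives
`det Φ_A(X) = det D · (1 - ∑ |v_i|² / D_i) = 60 q³ (1 - 1/2 - 1/3 - 1/5) = -1`. -/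

namespace Matrix

variable {n K : Type*} [Fintype n] [DecidableEq n] [Field K]

theorem det_diagonal_sub_vecMulVec {d : n → K} (hd : ∀ i, d i ≠ 0) (u v : n → K) :
    (diagonal d - vecMulVec u v).det = (∏ i, d i) * (1 - ∑ i, u i * v i / d i) := by
  have hfactor : diagonal d - vecMulVec u v =
      diagonal d * (1 + replicateCol Unit (fun i => -u i / d i) * replicateRow Unit v) := by
    rw [← vecMulVec_eq]
    ext i j
    simp only [sub_apply, add_apply, diagonal_mul, vecMulVec_apply, diagonal_apply, one_apply]
    have := hd i
    split_ifs <;> field_simp <;> ring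
  rw [hfactor, det_mul, det_diagonal, det_one_add_replicateCol_mul_replicateRow]
  simp [dotProduct, mul_div_assoc, sub_eq_add_neg, neg_div, mul_div_left_comm]

theorem rank_pos_of_ne_zero {m : Type*} {A : Matrix m n K} (hA : A ≠ 0) : 0 < A.rank := by
  rw [Nat.pos_iff_ne_zero, rank, Ne, Submodule.finrank_eq_zero, LinearMap.range_eq_bot]
  exact fun h => hA (Matrix.toLin'.injective (by rwa [toLin'_apply', map_zero]))

theorem rank_vecMulVec_eq_one {u v : n → K} (hu : u ≠ 0) (hv : v ≠ 0) :
    (vecMulVec u v).rank = 1 :=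
  le_antisymm (rank_vecMulVec_le u v) (rank_pos_of_ne_zero (vecMulVec_ne_zero hu hv))

end Matrix

theorem phiMap_eq_phiDelta {n : ℕ} (A : Matrix (Fin n) (Fin n) ℝ) : PhiMap A = PhiDelta A := by
  ext X i j
  by_cases h : i = j
  · subst h; simp [PhiMap, PhiDelta, DeltaMap, add_mul, Finset.sum_add_distrib]
  · simp [PhiMap, PhiDelta, DeltaMap, h]

def exampleA : Matrix (Fin 3) (Fin 3) ℝ := !![1/2, 1, 0; 0, 1, 1; 1, 0, 2]

def exampleVec : Fin 3 → ℂ :=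
  ![(((2 : ℝ) ^ ((1 : ℝ) / 3) : ℝ) : ℂ), (((2 : ℝ) ^ (-(1 : ℝ) / 6) : ℝ) : ℂ),
    (((2 : ℝ) ^ (-(1 : ℝ) / 6) : ℝ) : ℂ)]

theorem exampleX_eq_vecMulVec : exampleX = vecMulVec exampleVec (star exampleVec) := by
  ext i j
  fin_cases i <;> fin_cases j <;>
    simp [exampleX, exampleVec, vecMulVec_apply, ← Complex.ofReal_mul,
      ← Real.rpow_add two_pos] <;>
    norm_num

theorem posSemidef_exampleX : exampleX.PosSemidef :=
  exampleX_eq_vecMulVec ▸ posSemidef_vecMulVec_self_star exampleVec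

theorem rank_exampleX : exampleX.rank = 1 := by
  have hv : exampleVec ≠ 0 := fun h => by simpa [exampleVec] using congrFun h 0
  rw [exampleX_eq_vecMulVec, rank_vecMulVec_eq_one hv (star_ne_zero.mpr hv)]

theorem two_rpow_two_thirds : (2 : ℝ) ^ ((2 : ℝ) / 3) = 2 * 2 ^ (-(1 : ℝ) / 3) := by
  rw [← Real.rpow_one_add' zero_le_two] <;> norm_num

theorem two_rpow_neg_one_third_pow_three : ((2 : ℝ) ^ (-(1 : ℝ) / 3)) ^ 3 = 1 / 2 := by
  rw [← Real.rpow_mul_natCast zero_le_two]; norm_num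

theorem deltaMap_exampleX :
    DeltaMap exampleA exampleX =
      diagonal (fun i => ![4, 3, 5] i * (((2 : ℝ) ^ (-(1 : ℝ) / 3) : ℝ) : ℂ)) := by
  ext i j
  fin_cases i <;> fin_cases j <;>
    simp [DeltaMap, exampleA, exampleX, Fin.sum_univ_three, two_rpow_two_thirds] <;> ring

theorem det_phiMap_exampleX : (PhiMap exampleA exampleX).det = -1 := by
  have hdiag (i : Fin 3) : exampleVec i * star exampleVec i = exampleX i i := by
    rw [exampleX_eq_vecMulVec, vecMulVec_apply]
  rw [phiMap_eq_phiDelta, PhiDelta, deltaMap_exampleX, exampleX_eq_vecMulVec,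
    det_diagonal_sub_vecMulVec]
  · simp only [hdiag, Fin.prod_univ_three, Fin.sum_univ_three, exampleX, two_rpow_two_thirds,
      Complex.ofReal_mul, Complex.ofReal_ofNat, of_apply, cons_val', cons_val_zero, cons_val_one,
      cons_val, cons_val_fin_one]
    have hq := two_rpow_neg_one_third_pow_three
    generalize (2 : ℝ) ^ (-(1 : ℝ) / 3) = q at hq ⊢
    have hq0 : q ≠ 0 := by rintro rfl; norm_num at hq
    field_simp
    rw [← Complex.ofReal_pow, hq]
    norm_num
  · intro i; fin_cases i <;> simp

theorem not_posSemidef_phiMap_exampleX : ¬ (PhiMap exampleA exampleX).PosSemidef := fun h =>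
  absurd h.det_nonneg (by rw [det_phiMap_exampleX]; norm_num)

/-- For `A` with rows `(1/2,1,0)`, `(0,1,1)`, `(1,0,2)`, the map `Φ_A` is
not positive: the matrix `X` above is positive semidefinite of rank one, yet `Φ_A(X)`
has determinant `-1` and hence is not positive semidefinite. -/
theorem phiMap_counterexample :
    ¬ IsPosMap (PhiMap !![1/2, 1, 0; 0, 1, 1; 1, 0, 2]) ∧
    exampleX.PosSemidef ∧ exampleX.rank = 1 ∧
    (PhiMap !![1/2, 1, 0; 0, 1, 1; 1, 0, 2] exampleX).det = -1 ∧
    ¬ (PhiMap !![1/2, 1, 0; 0, 1, 1; 1, 0, 2] exampleX).PosSemidef :=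
  ⟨fun h => not_posSemidef_phiMap_exampleX (h exampleX posSemidef_exampleX), posSemidef_exampleX,
    rank_exampleX, det_phiMap_exampleX, not_posSemidef_phiMap_exampleX⟩
end
end
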